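/- arXiv:2604.15596 — 3 statements merged into one kernel-verified Lean document; each statement's English description precedes it below -/
import Mathlib

section
/- Let ρ ∈ [0,1]^M with mean ρ̄ > 0 and Gini coefficient G. Then (1/M)∑_{j=1}^M ρ_j(1−ρ_j) ≤ ρ̄(1−ρ̄) − 3ρ̄²G². -/
open Finset

private lemma aux_sum_lin (n : ℕ) (t : ℝ) :
    ∑ j ∈ Finset.range n, (2 * (j : ℝ) + t) = n * (n - 1) + n * t := by
  induction n with
  | zero => simp
  | succ n ih =>
    rw [Finset.sum_range_succ, ih]
    push_cast
    ring

private lemma aux_sum_sq (n : ℕ) (t : ℝ) :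
    ∑ j ∈ Finset.range n, (2 * (j : ℝ) + t) ^ 2
      = (2/3) * n * (n - 1) * (2 * n - 1) + 2 * t * n * (n - 1) + n * t ^ 2 := by
  induction n with
  | zero => simp
  | succ n ih =>
    rw [Finset.sum_range_succ, ih]
    push_cast
    ring

private lemma mono_abs_sum (M : ℕ) (a : Fin M → ℝ) (ha : Monotone a) :
    ∑ i, ∑ j, |a i - a j| = 2 * ∑ j : Fin M, (2 * (j : ℝ) + 1 - M) * a j := by
  have step1 : ∀ i j : Fin M, |a i - a j| = (if i ≤ j then (1:ℝ) else -1) * (a j - a i) := by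
    intro i j
    rcases le_or_gt i j with h | h
    · rw [if_pos h, one_mul, abs_sub_comm, abs_of_nonneg (sub_nonneg.2 (ha h))]
    · rw [if_neg (not_le.2 h), abs_of_nonneg (sub_nonneg.2 (ha h.le))]; ring
  have hcount1 : ∀ j : Fin M, ∑ i, (if i ≤ j then (1:ℝ) else -1) = 2 * (j : ℝ) + 2 - M := by
    intro j
    have h1 : ∑ i : Fin M, (if i ≤ j then (1:ℝ) else -1)
        = ∑ i : Fin M, (2 * (if i ≤ j then (1:ℝ) else 0) - 1) := by
      refine Finset.sum_congr rfl fun i _ => ?_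
      split_ifs <;> ring
    have h2 : ∑ i : Fin M, (if i ≤ j then (1:ℝ) else 0) = ((j : ℕ) + 1 : ℝ) := by
      have hf : Finset.filter (fun i : Fin M => i ≤ j) Finset.univ = Finset.Iic j := by
        ext i; simp
      rw [Finset.sum_boole, hf, Fin.card_Iic]
      push_cast
      ring
    rw [h1, Finset.sum_sub_distrib, ← Finset.mul_sum, h2]
    simp [Finset.card_univ]
    ring
  have hcount2 : ∀ i : Fin M, ∑ j, (if i ≤ j then (1:ℝ) else -1) = (M : ℝ) - 2 * (i : ℝ) := by
    intro i
    have h1 : ∑ j : Fin M, (if i ≤ j then (1:ℝ) else -1)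
        = ∑ j : Fin M, (2 * (if i ≤ j then (1:ℝ) else 0) - 1) := by
      refine Finset.sum_congr rfl fun j _ => ?_
      split_ifs <;> ring
    have h2 : ∑ j : Fin M, (if i ≤ j then (1:ℝ) else 0) = ((M - (i : ℕ) : ℕ) : ℝ) := by
      have hf : Finset.filter (fun j : Fin M => i ≤ j) Finset.univ = Finset.Ici i := by
        ext j; simp
      rw [Finset.sum_boole, hf, Fin.card_Ici]
    have hcast : ((M - (i : ℕ) : ℕ) : ℝ) = (M : ℝ) - (i : ℕ) := by
      rw [Nat.cast_sub i.2.le]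
    rw [h1, Finset.sum_sub_distrib, ← Finset.mul_sum, h2, hcast]
    simp [Finset.card_univ]
    ring
  calc ∑ i, ∑ j, |a i - a j|
      = ∑ i, ∑ j, (if i ≤ j then (1:ℝ) else -1) * (a j - a i) := by
        exact Finset.sum_congr rfl fun i _ => Finset.sum_congr rfl fun j _ => step1 i j
    _ = (∑ i, ∑ j, (if i ≤ j then (1:ℝ) else -1) * a j)
        - ∑ i, ∑ j, (if i ≤ j then (1:ℝ) else -1) * a i := by
        rw [← Finset.sum_sub_distrib]
        refine Finset.sum_congr rfl fun i _ => ?_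
        rw [← Finset.sum_sub_distrib]
        refine Finset.sum_congr rfl fun j _ => ?_
        ring
    _ = (∑ j : Fin M, (2 * (j : ℝ) + 2 - M) * a j)
        - ∑ i : Fin M, ((M : ℝ) - 2 * (i : ℝ)) * a i := by
        congr 1
        · rw [Finset.sum_comm]
          refine Finset.sum_congr rfl fun j _ => ?_
          rw [← Finset.sum_mul, hcount1 j]
        · refine Finset.sum_congr rfl fun i _ => ?_
          rw [← Finset.sum_mul, hcount2 i]
    _ = 2 * ∑ j : Fin M, (2 * (j : ℝ) + 1 - M) * a j := by
        rw [← Finset.sum_sub_distrib, Finset.mul_sum]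
        refine Finset.sum_congr rfl fun j _ => ?_
        ring

private lemma key_ineq (M : ℕ) (ρ : Fin M → ℝ) (m : ℝ) (hm : ∑ j, ρ j = M * m) :
    3 * (∑ i, ∑ j, |ρ i - ρ j|) ^ 2 ≤ 4 * (M : ℝ) ^ 3 * ∑ j, (ρ j - m) ^ 2 := by
  set σ := Tuple.sort ρ with hσ
  set a : Fin M → ℝ := ρ ∘ σ with haa
  have ha : Monotone a := Tuple.monotone_sort ρ
  have hS : ∑ i, ∑ j, |a i - a j| = ∑ i, ∑ j, |ρ i - ρ j| := by
    calc ∑ i, ∑ j, |a i - a j| = ∑ i, ∑ j, |ρ (σ i) - ρ j| := by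
          refine Finset.sum_congr rfl fun i _ => ?_
          exact Equiv.sum_comp σ (fun j => |ρ (σ i) - ρ j|)
      _ = ∑ i, ∑ j, |ρ i - ρ j| := Equiv.sum_comp σ (fun i => ∑ j, |ρ i - ρ j|)
  have hV : ∑ j, (a j - m) ^ 2 = ∑ j, (ρ j - m) ^ 2 :=
    Equiv.sum_comp σ (fun j => (ρ j - m) ^ 2)
  have hsum_a : ∑ j, a j = M * m := by
    rw [show (∑ j, a j) = ∑ j, ρ (σ j) from rfl, Equiv.sum_comp σ ρ, hm]
  set c : Fin M → ℝ := fun j => 2 * (j : ℝ) + 1 - M with hc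
  have hc0 : ∑ j, c j = 0 := by
    have := aux_sum_lin M (1 - (M : ℝ))
    rw [show (∑ j, c j) = ∑ j ∈ Finset.range M, (2 * (j : ℝ) + (1 - (M:ℝ))) from ?_, this]
    · ring
    · rw [Fin.sum_univ_eq_sum_range (fun j => 2 * (j : ℝ) + 1 - (M:ℝ))]
      exact Finset.sum_congr rfl fun j _ => by ring
  have hc2 : 3 * (∑ j, (c j) ^ 2) ≤ (M : ℝ) ^ 3 := by
    have := aux_sum_sq M (1 - (M : ℝ))
    have he : (∑ j, (c j) ^ 2) = ∑ j ∈ Finset.range M, (2 * (j : ℝ) + (1 - (M:ℝ))) ^ 2 := by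
      rw [Fin.sum_univ_eq_sum_range (fun j => (2 * (j : ℝ) + 1 - (M:ℝ)) ^ 2)]
      exact Finset.sum_congr rfl fun j _ => by ring
    rw [he, this]
    have hM0 : (0 : ℝ) ≤ (M : ℝ) := Nat.cast_nonneg M
    nlinarith [hM0]
  have hcs := Finset.sum_mul_sq_le_sq_mul_sq Finset.univ c (fun j => a j - m)
  have hT : ∑ j, c j * (a j - m) = ∑ j, c j * a j := by
    rw [show (∑ j, c j * (a j - m)) = ∑ j, (c j * a j - m * c j) from
      Finset.sum_congr rfl fun j _ => by ring, Finset.sum_sub_distrib, ← Finset.mul_sum, hc0]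
    ring
  have hkey := mono_abs_sum M a ha
  have hca : ∑ j, c j * a j = ∑ j : Fin M, (2 * (j : ℝ) + 1 - M) * a j := rfl
  have hVnn : (0 : ℝ) ≤ ∑ j, (a j - m) ^ 2 :=
    Finset.sum_nonneg fun j _ => sq_nonneg _
  have hc2nn : (0 : ℝ) ≤ ∑ j, (c j) ^ 2 :=
    Finset.sum_nonneg fun j _ => sq_nonneg _
  rw [← hS, ← hV, hkey, ← hca]
  rw [hT] at hcs
  nlinarith [hcs, hVnn, hc2, hc2nn, sq_nonneg (∑ j, c j * a j)]

/-- Lemma (inequality vs. variance): for `ρ ∈ [0,1]^M` with mean `ρ̄ > 0` and Gini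
coefficient `G`, the average variance satisfies
`(1/M)∑ ρ_j(1−ρ_j) ≤ ρ̄(1−ρ̄) − 3ρ̄²G²`. -/
theorem inequality_variance (M : ℕ) (hM : 0 < M) (ρ : Fin M → ℝ)
    (hρ : ∀ j, 0 ≤ ρ j ∧ ρ j ≤ 1)
    (ρbar : ℝ) (hρbar : ρbar = (∑ j, ρ j) / M) (hρbar_pos : 0 < ρbar)
    (G : ℝ) (hG : G = (∑ i, ∑ j, |ρ i - ρ j|) / (2 * (M : ℝ) ^ 2 * ρbar)) :
    (1 / (M : ℝ)) * ∑ j, ρ j * (1 - ρ j) ≤ ρbar * (1 - ρbar) - 3 * ρbar ^ 2 * G ^ 2 := by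
  have hM0 : (0 : ℝ) < (M : ℝ) := Nat.cast_pos.2 hM
  have hMne : (M : ℝ) ≠ 0 := ne_of_gt hM0
  have hsum : ∑ j, ρ j = M * ρbar := by
    rw [hρbar]; field_simp
  have key := key_ineq M ρ ρbar hsum
  set S := ∑ i, ∑ j, |ρ i - ρ j| with hSdef
  set Q := ∑ j, ρ j ^ 2 with hQdef
  have hVeq : ∑ j, (ρ j - ρbar) ^ 2 = Q - M * ρbar ^ 2 := by
    have : ∀ j : Fin M, (ρ j - ρbar) ^ 2 = ρ j ^ 2 - 2 * ρbar * ρ j + ρbar ^ 2 := by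
      intro j; ring
    rw [Finset.sum_congr rfl fun j _ => this j]
    rw [Finset.sum_add_distrib, Finset.sum_sub_distrib, ← Finset.mul_sum, hsum]
    simp [Finset.card_univ]
    ring
  have hQ1 : ∑ j, ρ j * (1 - ρ j) = M * ρbar - Q := by
    have : ∀ j : Fin M, ρ j * (1 - ρ j) = ρ j - ρ j ^ 2 := by intro j; ring
    rw [Finset.sum_congr rfl fun j _ => this j, Finset.sum_sub_distrib, hsum]
  rw [hVeq] at key
  have hG2 : 3 * ρbar ^ 2 * G ^ 2 = 3 * S ^ 2 / (4 * (M : ℝ) ^ 4) := by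
    rw [hG]
    field_simp
    ring
  rw [hQ1, hG2]
  have h1 : 3 * S ^ 2 / (4 * (M : ℝ) ^ 4) ≤ (Q - M * ρbar ^ 2) / M := by
    rw [div_le_div_iff₀ (by positivity) hM0]
    nlinarith [key, hM0]
  have h2 : (1 / (M : ℝ)) * (M * ρbar - Q) = ρbar - Q / M := by field_simp
  have h3 : (Q - M * ρbar ^ 2) / M = Q / M - ρbar ^ 2 := by field_simp
  rw [h2]
  rw [h3] at h1
  nlinarith [h1]
end

section
/- Consider the linear program: maximize ∑_{i=1}^P x_i(1−η_i) subject to ∑_i x_i = k' and 0 ≤ x_i ≤ 1, where η ∈ [0,1]^P and k' is an integer with 0 ≤ k' ≤ P. Let x* be an optimal solution for η and let x̃* be an optimal solution for a perturbed vector η̂ ∈ [0,1]^P. Then ∑_i x_i*(1−η_i) − ∑_i x̃_i*(1−η_i) ≤ ∑_{i=1}^P |x_i* − x̃_i*|·|η̂_i − η_i| ≤ ∑_{i=1}^P |η̂_i − η_i|. -/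
open Finset

/-- Perturbation bound for the ILA linear program: if `x*` maximizes `∑ x_i (1−η_i)` and
`x̃*` maximizes the same objective with `η` replaced by `η̂`, both over
`{x ∈ [0,1]^P : ∑ x_i = k'}`, then the loss in objective value is at most
`∑ |x*_i − x̃*_i|·|η̂_i − η_i| ≤ ∑ |η̂_i − η_i|`. -/
theorem ila_lp_perturbation (P : ℕ) (η ηhat : Fin P → ℝ)
    (hη : ∀ i, 0 ≤ η i ∧ η i ≤ 1) (hηhat : ∀ i, 0 ≤ ηhat i ∧ ηhat i ≤ 1)
    (k' : ℕ) (hk' : k' ≤ P)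
    (xstar xtil : Fin P → ℝ)
    (hxstar_feas : (∀ i, 0 ≤ xstar i ∧ xstar i ≤ 1) ∧ ∑ i, xstar i = k')
    (hxtil_feas : (∀ i, 0 ≤ xtil i ∧ xtil i ≤ 1) ∧ ∑ i, xtil i = k')
    (hxstar_opt : ∀ x : Fin P → ℝ, (∀ i, 0 ≤ x i ∧ x i ≤ 1) → ∑ i, x i = k' →
      ∑ i, x i * (1 - η i) ≤ ∑ i, xstar i * (1 - η i))
    (hxtil_opt : ∀ x : Fin P → ℝ, (∀ i, 0 ≤ x i ∧ x i ≤ 1) → ∑ i, x i = k' →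
      ∑ i, x i * (1 - ηhat i) ≤ ∑ i, xtil i * (1 - ηhat i)) :
    (∑ i, xstar i * (1 - η i)) - (∑ i, xtil i * (1 - η i))
      ≤ ∑ i, |xstar i - xtil i| * |ηhat i - η i| ∧
    ∑ i, |xstar i - xtil i| * |ηhat i - η i| ≤ ∑ i, |ηhat i - η i| := by
  constructor
  · have h1 : ∑ i, xstar i * (1 - ηhat i) ≤ ∑ i, xtil i * (1 - ηhat i) :=
      hxtil_opt xstar hxstar_feas.1 hxstar_feas.2
    have h2 : (∑ i, xstar i * (1 - η i)) - (∑ i, xtil i * (1 - η i))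
        ≤ ∑ i, (xstar i - xtil i) * (ηhat i - η i) := by
      have : ∑ i, (xstar i - xtil i) * (ηhat i - η i)
          = ((∑ i, xstar i * (1 - η i)) - (∑ i, xtil i * (1 - η i)))
            - ((∑ i, xstar i * (1 - ηhat i)) - (∑ i, xtil i * (1 - ηhat i))) := by
        simp only [← Finset.sum_sub_distrib]
        apply Finset.sum_congr rfl
        intro i _
        ring
      linarith
    refine h2.trans (Finset.sum_le_sum fun i _ => ?_)
    calc (xstar i - xtil i) * (ηhat i - η i) ≤ |(xstar i - xtil i) * (ηhat i - η i)| :=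
          le_abs_self _
      _ = |xstar i - xtil i| * |ηhat i - η i| := abs_mul _ _
  · refine Finset.sum_le_sum fun i _ => ?_
    have h : |xstar i - xtil i| ≤ 1 := by
      have := hxstar_feas.1 i
      have := hxtil_feas.1 i
      rw [abs_le]; constructor <;> linarith
    calc |xstar i - xtil i| * |ηhat i - η i| ≤ 1 * |ηhat i - η i| := by
          apply mul_le_mul_of_nonneg_right h (abs_nonneg _)
      _ = |ηhat i - η i| := one_mul _
end

section
/- Let x, x̃ ∈ ℝ^M satisfy 0 ≤ x_j, x̃_j ≤ N for all j, with ∑x_j = ∑x̃_j = k and P = MN. Then ‖x − x̃‖_2 ≤ sqrt(2·min(k, P−k)·N). -/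
open Finset

/-- Two vectors with components in `[0, N]` each summing to `k` (with `P = M·N`) differ
in `ℓ₂` norm by at most `sqrt(2·min(k, P−k)·N)`. -/
theorem l2_diff_bound (M : ℕ) (N : ℝ) (hN : 0 < N) (P : ℝ) (hP : P = (M : ℝ) * N)
    (k : ℝ) (hk0 : 0 ≤ k) (hkP : k ≤ P)
    (x xtil : Fin M → ℝ)
    (hx : ∀ j, 0 ≤ x j ∧ x j ≤ N) (hxtil : ∀ j, 0 ≤ xtil j ∧ xtil j ≤ N)
    (hxsum : ∑ j, x j = k) (hxtilsum : ∑ j, xtil j = k) :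
    Real.sqrt (∑ j, (x j - xtil j) ^ 2) ≤ Real.sqrt (2 * min k (P - k) * N) := by
  apply Real.sqrt_le_sqrt
  have habs : ∀ j, |x j - xtil j| ≤ N := by
    intro j
    rw [abs_le]
    constructor <;> nlinarith [(hx j).1, (hx j).2, (hxtil j).1, (hxtil j).2]
  have h1 : ∑ j, (x j - xtil j) ^ 2 ≤ N * ∑ j, |x j - xtil j| := by
    rw [Finset.mul_sum]
    apply Finset.sum_le_sum
    intro j _
    have := abs_nonneg (x j - xtil j)
    nlinarith [habs j, sq_abs (x j - xtil j)]
  have h2 : ∑ j, |x j - xtil j| ≤ 2 * k := by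
    calc ∑ j, |x j - xtil j| ≤ ∑ j, (x j + xtil j) := by
          apply Finset.sum_le_sum
          intro j _
          rw [abs_le]
          constructor <;> nlinarith [(hx j).1, (hxtil j).1]
      _ = 2 * k := by rw [Finset.sum_add_distrib, hxsum, hxtilsum]; ring
  have h3 : ∑ j, |x j - xtil j| ≤ 2 * (P - k) := by
    calc ∑ j, |x j - xtil j| ≤ ∑ j, ((N - x j) + (N - xtil j)) := by
          apply Finset.sum_le_sum
          intro j _
          rw [abs_le]
          constructor <;> nlinarith [(hx j).2, (hxtil j).2]
      _ = 2 * (P - k) := by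
          rw [Finset.sum_add_distrib, Finset.sum_sub_distrib, Finset.sum_sub_distrib,
            hxsum, hxtilsum, Finset.sum_const, Finset.card_univ, Fintype.card_fin,
            nsmul_eq_mul, hP]
          ring
  have hmin : ∑ j, |x j - xtil j| ≤ 2 * min k (P - k) := by
    rcases min_cases k (P - k) with ⟨h, _⟩ | ⟨h, _⟩ <;> rw [h] <;> linarith
  nlinarith [hN.le]
end
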